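/- For $s > -1/2$, the bilinear operator $B_2$ defined by $B_2(u,v)_k = \sum_{k_1+k_2=k,\, k_1,k_2 \neq 0} \frac{e^{i3kk_1k_2 t}}{k_1 k_2} u_{k_1} v_{k_2}$ for $k \in \mathbb{Z}\setminus\{0\}$ satisfies $\|B_2(u,v)\|_{\dot H^{s+1}} \leq c_2(s+1) \|u\|_{\dot H^s} \|v\|_{\dot H^s}$ for a constant $c_2(s+1)$ depending only on $s$. -/

import Mathlib

open Complex

noncomputable def hnorm (s : ℝ) (u : ℤ → ℂ) : ℝ :=
  (∑' k : ℤ, |(k : ℝ)| ^ (2 * s) * ‖u k‖ ^ 2) ^ ((1 : ℝ) / 2)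

/-- The bilinear operator `B₂` of the KdV equation. -/
noncomputable def B2 (t : ℝ) (u v : ℤ → ℂ) (k : ℤ) : ℂ :=
  ∑' k1 : ℤ, Complex.exp (Complex.I * (3 * (k : ℂ) * (k1 : ℂ) * ((k : ℂ) - (k1 : ℂ)) * (t : ℂ)))
      / ((k1 : ℂ) * ((k : ℂ) - (k1 : ℂ))) * u k1 * v (k - k1)

/-!
For `k = k₁ + k₂` and `s + 1 ≥ 0` we have `|k|^(s+1) ≤ 2^(s+1) (|k₁|^(s+1) + |k₂|^(s+1))`, so the
weighted summand `|k|^(s+1) |u k₁| |v k₂| / |k₁ k₂|` is at most `2^(s+1) a k₁ b k₂ (m k₁ + m k₂)`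
with `a = |·|^s |u|`, `b = |·|^s |v|` and `m = |·|^(-(s+1))`. Cauchy–Schwarz in `k₁` followed by
summation over `k` bounds `‖B₂(u,v)‖²_{Ḣ^{s+1}}` by `4 · 4^(s+1) ‖m‖²_{ℓ²} ‖u‖²_{Ḣ^s} ‖v‖²_{Ḣ^s}`,
and `‖m‖_{ℓ²}` is finite precisely because `2(s+1) > 1`. Here `a`, `b`, `m` are
`weightedNorm s u`, `weightedNorm s v` and `weightedNorm (-(s+1)) 1`. All sums are taken in
`ℝ≥0∞`, so that no summability has to be tracked until the very end.
-/

open scoped ENNReal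

theorem ENNReal.add_sq_le_two_mul (a b : ℝ≥0∞) : (a + b) ^ 2 ≤ 2 * (a ^ 2 + b ^ 2) := by
  have := ENNReal.rpow_add_le_mul_rpow_add_rpow a b (p := 2) one_le_two
  norm_num [ENNReal.rpow_two] at this
  exact this

theorem ENNReal.sq_tsum_mul_le {ι : Type*} (f g : ι → ℝ≥0∞) :
    (∑' i, f i * g i) ^ 2 ≤ (∑' i, f i ^ 2) * ∑' i, g i ^ 2 := by
  let _ : MeasurableSpace ι := ⊤
  have holder := ENNReal.lintegral_mul_le_Lp_mul_Lq .count .two_two (f := f) (g := g)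
    measurable_from_top.aemeasurable measurable_from_top.aemeasurable
  simp only [MeasureTheory.lintegral_count, Pi.mul_apply, ENNReal.rpow_two] at holder
  calc (∑' i, f i * g i) ^ 2
      ≤ ((∑' i, f i ^ 2) ^ (1 / 2 : ℝ) * (∑' i, g i ^ 2) ^ (1 / 2 : ℝ)) ^ 2 := by gcongr
    _ = (∑' i, f i ^ 2) * ∑' i, g i ^ 2 := by
      rw [mul_pow, ← ENNReal.rpow_two, ← ENNReal.rpow_two, ← ENNReal.rpow_mul,
        ← ENNReal.rpow_mul]
      norm_num

section Convolution

variable {G : Type*} [AddCommGroup G]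

theorem ENNReal.tsum_tsum_mul_sub (f g : G → ℝ≥0∞) :
    ∑' k, ∑' j, f j * g (k - j) = (∑' j, f j) * ∑' j, g j := by
  rw [ENNReal.tsum_comm, ← ENNReal.tsum_mul_right]
  refine tsum_congr fun j => ?_
  rw [ENNReal.tsum_mul_left]
  congr 1
  exact (Equiv.subRight j).tsum_eq g

theorem ENNReal.tsum_add_sub_sq_le (m : G → ℝ≥0∞) (k : G) :
    ∑' j, (m j + m (k - j)) ^ 2 ≤ 4 * ∑' j, m j ^ 2 := by
  have hreflect : ∑' j, m (k - j) ^ 2 = ∑' j, m j ^ 2 :=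
    (Equiv.subLeft k).tsum_eq fun j => m j ^ 2
  calc ∑' j, (m j + m (k - j)) ^ 2
      ≤ ∑' j, 2 * (m j ^ 2 + m (k - j) ^ 2) :=
        ENNReal.tsum_le_tsum fun j => ENNReal.add_sq_le_two_mul _ _
    _ = 4 * ∑' j, m j ^ 2 := by
      rw [ENNReal.tsum_mul_left, ENNReal.tsum_add, hreflect, ← two_mul, ← mul_assoc]
      norm_num

theorem ENNReal.tsum_sq_tsum_mul_sub_le (a b m : G → ℝ≥0∞) :
    ∑' k, (∑' j, a j * b (k - j) * (m j + m (k - j))) ^ 2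
      ≤ 4 * (∑' j, a j ^ 2) * (∑' j, b j ^ 2) * ∑' j, m j ^ 2 := by
  calc ∑' k, (∑' j, a j * b (k - j) * (m j + m (k - j))) ^ 2
      ≤ ∑' k, (∑' j, a j ^ 2 * b (k - j) ^ 2) * (4 * ∑' j, m j ^ 2) := by
        refine ENNReal.tsum_le_tsum fun k => (ENNReal.sq_tsum_mul_le _ _).trans ?_
        simp only [mul_pow]
        gcongr
        exact ENNReal.tsum_add_sub_sq_le m k
    _ = 4 * (∑' j, a j ^ 2) * (∑' j, b j ^ 2) * ∑' j, m j ^ 2 := by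
      rw [ENNReal.tsum_mul_right, ENNReal.tsum_tsum_mul_sub (fun j => a j ^ 2) (fun j => b j ^ 2)]
      ring

end Convolution

theorem abs_add_rpow_le {r : ℝ} (hr : 0 ≤ r) (x y : ℝ) :
    |x + y| ^ r ≤ 2 ^ r * (|x| ^ r + |y| ^ r) := by
  have hmax : |x + y| ≤ 2 * max |x| |y| := by
    linarith [abs_add_le x y, le_max_left |x| |y|, le_max_right |x| |y|]
  calc |x + y| ^ r ≤ (2 * max |x| |y|) ^ r := by gcongr
    _ = 2 ^ r * max |x| |y| ^ r := Real.mul_rpow zero_le_two (by positivity)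
    _ ≤ 2 ^ r * (|x| ^ r + |y| ^ r) := by
      gcongr
      rcases max_cases |x| |y| with ⟨h, _⟩ | ⟨h, _⟩ <;> rw [h]
      · exact le_add_of_nonneg_right (by positivity)
      · exact le_add_of_nonneg_left (by positivity)

theorem abs_add_rpow_mul_inv_le {s : ℝ} (hs : 0 ≤ s + 1) (x y : ℝ) :
    |x + y| ^ (s + 1) * (|x|⁻¹ * |y|⁻¹)
      ≤ 2 ^ (s + 1) * (|x| ^ s * |y| ^ s) * (|x| ^ (-(s + 1)) + |y| ^ (-(s + 1))) := by
  rcases eq_or_ne x 0 with rfl | hx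
  · simp only [abs_zero, inv_zero, zero_mul, mul_zero]; positivity
  rcases eq_or_ne y 0 with rfl | hy
  · simp only [abs_zero, inv_zero, mul_zero]; positivity
  have hx' : 0 < |x| := abs_pos.mpr hx
  have hy' : 0 < |y| := abs_pos.mpr hy
  have hsplit : ∀ {z : ℝ}, 0 < z → z ^ s = z ^ (s + 1) * z⁻¹ := fun hz => by
    rw [Real.rpow_add hz, Real.rpow_one, mul_inv_cancel_right₀ hz.ne']
  have hcancel : ∀ {z : ℝ}, 0 < z → z ^ (s + 1) * z ^ (-(s + 1)) = 1 := fun hz => by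
    rw [← Real.rpow_add hz, add_neg_cancel, Real.rpow_zero]
  calc |x + y| ^ (s + 1) * (|x|⁻¹ * |y|⁻¹)
      ≤ 2 ^ (s + 1) * (|x| ^ (s + 1) + |y| ^ (s + 1)) * (|x|⁻¹ * |y|⁻¹) := by
        gcongr; exact abs_add_rpow_le hs x y
    _ = _ := by
      rw [hsplit hx', hsplit hy']
      linear_combination -(2 ^ (s + 1) * |x|⁻¹ * |y|⁻¹) *
        (|y| ^ (s + 1) * hcancel hx' + |x| ^ (s + 1) * hcancel hy')

noncomputable def weightedNorm (s : ℝ) (u : ℤ → ℂ) (k : ℤ) : ℝ≥0∞ :=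
  ENNReal.ofReal (|(k : ℝ)| ^ s * ‖u k‖)

theorem weightedNorm_sq (s : ℝ) (u : ℤ → ℂ) (k : ℤ) :
    weightedNorm s u k ^ 2 = ENNReal.ofReal (|(k : ℝ)| ^ (2 * s) * ‖u k‖ ^ 2) := by
  rw [weightedNorm, ← ENNReal.ofReal_pow (by positivity), mul_pow, mul_comm 2 s,
    Real.rpow_mul (abs_nonneg _), Real.rpow_two]

theorem hnorm_eq_sqrt_toReal_tsum (s : ℝ) (u : ℤ → ℂ) :
    hnorm s u = √(∑' k, weightedNorm s u k ^ 2).toReal := by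
  rw [hnorm, ← Real.sqrt_eq_rpow, ENNReal.tsum_toReal_eq fun _ => by simp [weightedNorm_sq]]
  simp only [weightedNorm_sq]
  exact congrArg _ (tsum_congr fun k => (ENNReal.toReal_ofReal (by positivity)).symm)

theorem tsum_weightedNorm_sq_ne_top {s : ℝ} {u : ℤ → ℂ}
    (hu : Summable fun k : ℤ => |(k : ℝ)| ^ (2 * s) * ‖u k‖ ^ 2) :
    ∑' k, weightedNorm s u k ^ 2 ≠ ⊤ := by
  simp only [weightedNorm_sq, ← ENNReal.ofReal_tsum_of_nonneg (fun _ => by positivity) hu]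
  exact ENNReal.ofReal_ne_top

theorem norm_B2_summand (t : ℝ) (u v : ℤ → ℂ) (k k1 : ℤ) :
    ‖Complex.exp (Complex.I * (3 * (k : ℂ) * (k1 : ℂ) * ((k : ℂ) - (k1 : ℂ)) * (t : ℂ)))
      / ((k1 : ℂ) * ((k : ℂ) - (k1 : ℂ))) * u k1 * v (k - k1)‖
    = |(k1 : ℝ)|⁻¹ * |((k - k1 : ℤ) : ℝ)|⁻¹ * ‖u k1‖ * ‖v (k - k1)‖ := by
  have hsub : (k : ℂ) - (k1 : ℂ) = ((k - k1 : ℤ) : ℂ) := by push_cast; ring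
  rw [hsub, norm_mul, norm_mul, norm_div, Complex.norm_exp, norm_mul, Complex.norm_intCast,
    Complex.norm_intCast]
  have hre : (Complex.I * (3 * (k : ℂ) * (k1 : ℂ) * ((k - k1 : ℤ) : ℂ) * (t : ℂ))).re = 0 := by
    simp
  rw [hre, Real.exp_zero]
  ring

theorem weightedNorm_mul_enorm_B2_summand_le {s : ℝ} (hs : 0 ≤ s + 1) (t : ℝ) (u v : ℤ → ℂ)
    (k j : ℤ) :
    ENNReal.ofReal (|(k : ℝ)| ^ (s + 1)) *
      ‖Complex.exp (Complex.I * (3 * (k : ℂ) * (j : ℂ) * ((k : ℂ) - (j : ℂ)) * (t : ℂ)))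
        / ((j : ℂ) * ((k : ℂ) - (j : ℂ))) * u j * v (k - j)‖ₑ
      ≤ ENNReal.ofReal (2 ^ (s + 1)) * (weightedNorm s u j * weightedNorm s v (k - j) *
          (weightedNorm (-(s + 1)) 1 j + weightedNorm (-(s + 1)) 1 (k - j))) := by
  simp only [weightedNorm, Pi.one_apply, norm_one, mul_one]
  rw [← ofReal_norm, ← ENNReal.ofReal_mul (by positivity),
    ← ENNReal.ofReal_add (by positivity) (by positivity), ← ENNReal.ofReal_mul (by positivity),
    ← ENNReal.ofReal_mul (by positivity), ← ENNReal.ofReal_mul (by positivity), norm_B2_summand]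
  refine ENNReal.ofReal_le_ofReal ?_
  have hk : (j : ℝ) + ((k - j : ℤ) : ℝ) = k := by push_cast; ring
  have hweight := abs_add_rpow_mul_inv_le hs (j : ℝ) ((k - j : ℤ) : ℝ)
  rw [hk] at hweight
  calc _ = |(k : ℝ)| ^ (s + 1) * (|(j : ℝ)|⁻¹ * |((k - j : ℤ) : ℝ)|⁻¹) *
        (‖u j‖ * ‖v (k - j)‖) := by ring
    _ ≤ _ := mul_le_mul_of_nonneg_right hweight (by positivity)
    _ = _ := by ring

theorem weightedNorm_B2_le {s : ℝ} (hs : 0 ≤ s + 1) (t : ℝ) (u v : ℤ → ℂ) (k : ℤ) :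
    weightedNorm (s + 1) (B2 t u v) k
      ≤ ENNReal.ofReal (2 ^ (s + 1)) * ∑' j, weightedNorm s u j * weightedNorm s v (k - j) *
          (weightedNorm (-(s + 1)) 1 j + weightedNorm (-(s + 1)) 1 (k - j)) := by
  calc weightedNorm (s + 1) (B2 t u v) k
      = ENNReal.ofReal (|(k : ℝ)| ^ (s + 1)) * ‖B2 t u v k‖ₑ := by
        rw [weightedNorm, ENNReal.ofReal_mul (by positivity), ofReal_norm]
    _ ≤ ENNReal.ofReal (|(k : ℝ)| ^ (s + 1)) * ∑' j : ℤ,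
          ‖Complex.exp (Complex.I * (3 * (k : ℂ) * (j : ℂ) * ((k : ℂ) - (j : ℂ)) * (t : ℂ)))
            / ((j : ℂ) * ((k : ℂ) - (j : ℂ))) * u j * v (k - j)‖ₑ := by
        gcongr
        exact enorm_tsum_le_tsum_enorm
    _ ≤ _ := by
        rw [← ENNReal.tsum_mul_left, ← ENNReal.tsum_mul_left]
        exact ENNReal.tsum_le_tsum (weightedNorm_mul_enorm_B2_summand_le hs t u v k)

theorem tsum_weightedNorm_B2_sq_le {s : ℝ} (hs : 0 ≤ s + 1) (t : ℝ) (u v : ℤ → ℂ) :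
    ∑' k, weightedNorm (s + 1) (B2 t u v) k ^ 2
      ≤ 4 * ENNReal.ofReal (2 ^ (s + 1)) ^ 2 * (∑' k, weightedNorm (-(s + 1)) 1 k ^ 2) *
          (∑' k, weightedNorm s u k ^ 2) * ∑' k, weightedNorm s v k ^ 2 := by
  calc ∑' k, weightedNorm (s + 1) (B2 t u v) k ^ 2
      ≤ ∑' k, (ENNReal.ofReal (2 ^ (s + 1)) * ∑' j, weightedNorm s u j *
          weightedNorm s v (k - j) *
          (weightedNorm (-(s + 1)) 1 j + weightedNorm (-(s + 1)) 1 (k - j))) ^ 2 :=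
        ENNReal.tsum_le_tsum fun k => by gcongr; exact weightedNorm_B2_le hs t u v k
    _ ≤ ENNReal.ofReal (2 ^ (s + 1)) ^ 2 * (4 * (∑' k, weightedNorm s u k ^ 2) *
          (∑' k, weightedNorm s v k ^ 2) * ∑' k, weightedNorm (-(s + 1)) 1 k ^ 2) := by
        simp only [mul_pow, ENNReal.tsum_mul_left]
        gcongr
        exact ENNReal.tsum_sq_tsum_mul_sub_le _ _ _
    _ = _ := by ring

theorem ENNReal.sqrt_toReal_le_of_le_mul {x a b c : ℝ≥0∞} (h : x ≤ a * b * c) (ha : a ≠ ⊤)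
    (hb : b ≠ ⊤) (hc : c ≠ ⊤) : √x.toReal ≤ √a.toReal * √b.toReal * √c.toReal := by
  rw [← Real.sqrt_mul' _ ENNReal.toReal_nonneg, ← Real.sqrt_mul' _ ENNReal.toReal_nonneg,
    ← ENNReal.toReal_mul, ← ENNReal.toReal_mul]
  exact Real.sqrt_le_sqrt (ENNReal.toReal_mono (by finiteness) h)

theorem B2_bound (s : ℝ) (hs : -(1 / 2) < s) :
    ∃ C : ℝ, ∀ (t : ℝ) (u v : ℤ → ℂ), u 0 = 0 → v 0 = 0 →
      (Summable fun k : ℤ => |(k : ℝ)| ^ (2 * s) * ‖u k‖ ^ 2) →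
      (Summable fun k : ℤ => |(k : ℝ)| ^ (2 * s) * ‖v k‖ ^ 2) →
      hnorm (s + 1) (B2 t u v) ≤ C * hnorm s u * hnorm s v := by
  have hweight : Summable fun k : ℤ => |(k : ℝ)| ^ (2 * -(s + 1)) * ‖(1 : ℤ → ℂ) k‖ ^ 2 := by
    refine (Real.summable_abs_int_rpow (b := 2 * (s + 1)) (by linarith)).congr fun k => ?_
    rw [Pi.one_apply, norm_one, one_pow, mul_one, mul_neg]
  refine ⟨√(4 * ENNReal.ofReal (2 ^ (s + 1)) ^ 2 *
    (∑' k, weightedNorm (-(s + 1)) 1 k ^ 2)).toReal, fun t u v _ _ hu hv => ?_⟩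
  simp only [hnorm_eq_sqrt_toReal_tsum]
  exact ENNReal.sqrt_toReal_le_of_le_mul (tsum_weightedNorm_B2_sq_le (by linarith) t u v)
    (by finiteness [tsum_weightedNorm_sq_ne_top hweight]) (tsum_weightedNorm_sq_ne_top hu)
    (tsum_weightedNorm_sq_ne_top hv)
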